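/- Consider n agents and m items with multi-dimensional signals: for each agent i and each subset T of the items a nonnegative signal s_{iT}, and valuations of the separable-SOS form v_{iT}(t) = g_{iT}(t restricted to coordinates other than i) + h_{iT}(t_i) for t : Fin n → ℝ, where each g_{iT} is SOS, nonnegative on nonnegative vectors, and weakly increasing in each coordinate, and each h_{iT} is nonnegative and weakly increasing. For B ⊆ Fin n and i ∈ B, define the proxy value w_{iT}(B) := v_{iT}( (s_{·T})|_{Bᶜ ∪ {i}} ), where s_{·T} is the vector j ↦ s_{jT} and (·)|_C keeps coordinates in C and zeroes the rest. Then (1/2ⁿ) · Σ_{B ⊆ Fin n} [ max over allocations (T_i)_{i∈B} of Σ_{i∈B} w_{iT_i}(B) ] ≥ (1/4) · max over allocations (T_i)_{i∈Fin n} of Σ_i v_{iT_i}( s_{·T_i} ), where an allocation assigns each relevant agent a set T_i ⊆ Fin m with the T_i pairwise disjoint. This is the 4-approximation guarantee of the Random-Sampling VCG mechanism. -/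

import Mathlib

/-- `v` is a `d`-approximate submodular-over-signals (`d`-SOS) valuation;
`SOS` means `1`-SOS. -/
def dSOS {n : ℕ} (d : ℝ) (v : (Fin n → ℝ) → ℝ) : Prop :=
  ∀ (j : Fin n) (x δ : ℝ), 0 ≤ x → 0 ≤ δ →
    ∀ t t' : Fin n → ℝ, (∀ l, 0 ≤ t' l) → (∀ l, t' l ≤ t l) →
      d * (v (Function.update t' j (x + δ)) - v (Function.update t' j x)) ≥
        v (Function.update t j (x + δ)) - v (Function.update t j x)

/-- An allocation of the `m` items to the `n` agents: disjoint bundles. -/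
def IsAlloc {n m : ℕ} (T : Fin n → Finset (Fin m)) : Prop :=
  ∀ i j : Fin n, i ≠ j → Disjoint (T i) (T j)

/-- Supremum of `f` over all allocations of the `m` items to the `n` agents. -/
noncomputable def allocSup {n m : ℕ} (f : (Fin n → Finset (Fin m)) → ℝ) : ℝ :=
  ⨆ T : {T : Fin n → Finset (Fin m) // IsAlloc T}, f T.1

/-
SOS makes the marginal value of a coordinate diminish as more signals are revealed, so for
nonnegative signals `a` the set function `C ↦ g (a|_C)` is submodular. With `g 0 ≥ 0` it is
subadditive, `g (a|_U) ≤ g (a|_C) + g (a|_{U \ C})`, and averaging over the splits of `U` gives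
`g (a|_U) ≤ 2 𝔼_{C ⊆ U} g (a|_C)`. For an allocation `T`, agent `i` lies in the random set `B`
with probability `1/2`, and then its proxy reveals the uniformly random set `Bᶜ ⊆ univ \ {i}` of
the other signals; as `g_{iT}` ignores coordinate `i`, the expected proxy value of `i` is at least
`v_{iT}(s_{·T}) / 4`. Restricting `T` to `B` is one candidate for the optimal proxy allocation.
-/

open Finset

lemma Finset.piecewise_le_piecewise_of_subset {ι β : Type*} [DecidableEq ι] [Preorder β]
    {f g : ι → β} (hgf : g ≤ f) {C D : Finset ι} (hCD : C ⊆ D) :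
    C.piecewise f g ≤ D.piecewise f g := by
  intro l
  by_cases hC : l ∈ C
  · simp [hC, hCD hC]
  · rw [piecewise_eq_of_notMem _ _ _ hC]
    by_cases hD : l ∈ D
    · simpa [hD] using hgf l
    · simp [hD]

lemma Finset.sum_powerset_sdiff {α β : Type*} [DecidableEq α] [AddCommMonoid β]
    (s : Finset α) (f : Finset α → β) :
    ∑ t ∈ s.powerset, f (s \ t) = ∑ t ∈ s.powerset, f t :=
  sum_nbij' (s \ ·) (s \ ·) (fun _ _ => mem_powerset.2 sdiff_subset)
    (fun _ _ => mem_powerset.2 sdiff_subset)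
    (fun _ ht => sdiff_sdiff_eq_self (mem_powerset.1 ht))
    (fun _ ht => sdiff_sdiff_eq_self (mem_powerset.1 ht)) fun _ _ => rfl

lemma Finset.sum_powerset_sum_mem {ι β : Type*} [Fintype ι] [DecidableEq ι] [AddCommMonoid β]
    (F : ι → Finset ι → β) :
    ∑ B ∈ (univ : Finset ι).powerset, ∑ i ∈ B, F i B =
      ∑ i, ∑ C ∈ (univ.erase i).powerset, F i Cᶜ := by
  rw [sum_comm' (s' := fun i => ((univ.erase i).powerset).image compl) (t' := univ)]
  · exact sum_congr rfl fun i _ => sum_image fun _ _ _ _ h => compl_injective h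
  · intro B i
    simp only [mem_powerset, subset_univ, true_and, mem_image, mem_univ, and_true]
    constructor
    · intro hi
      exact ⟨Bᶜ, by simpa [subset_erase], compl_compl B⟩
    · rintro ⟨C, hC, rfl⟩
      simpa [subset_erase] using hC

lemma Finset.update_piecewise_eq_ite_compl {ι β : Type*} [Fintype ι] [DecidableEq ι] [Zero β]
    (a : ι → β) (i : ι) (C : Finset ι) :
    Function.update (C.piecewise a 0) i (a i) =
      fun l => if l = i ∨ l ∉ Cᶜ then a l else 0 := by
  ext l
  by_cases hl : l = i
  · simp [hl]
  · simp [hl, Finset.piecewise]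

section SOS

variable {n : ℕ} {g : (Fin n → ℝ) → ℝ} {a : Fin n → ℝ}

lemma dSOS.piecewise_insert_sub_le (hg : dSOS 1 g) (ha : 0 ≤ a) {C D : Finset (Fin n)}
    (hCD : C ⊆ D) {j : Fin n} (hj : j ∉ D) :
    g ((insert j D).piecewise a 0) - g (D.piecewise a 0) ≤
      g ((insert j C).piecewise a 0) - g (C.piecewise a 0) := by
  have hmarg := hg j 0 (a j) le_rfl (ha j) (D.piecewise a 0) (C.piecewise a 0)
    (C.le_piecewise_of_le_of_le ha le_rfl)
    (piecewise_le_piecewise_of_subset ha hCD)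
  have hupd : ∀ S : Finset (Fin n), j ∉ S →
      Function.update (S.piecewise a 0) j 0 = S.piecewise a 0 :=
    fun S hS => by simp [Function.update_eq_self_iff, hS]
  simp only [zero_add, one_mul, ← piecewise_insert, hupd D hj, hupd C (fun h => hj (hCD h))]
    at hmarg
  linarith

lemma dSOS.piecewise_union_add_le (hg : dSOS 1 g) (ha : 0 ≤ a) {C D : Finset (Fin n)}
    (hCD : Disjoint C D) :
    g ((C ∪ D).piecewise a 0) + g 0 ≤ g (C.piecewise a 0) + g (D.piecewise a 0) := by
  induction C using Finset.induction_on with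
  | empty => rw [empty_union, piecewise_empty, add_comm]
  | @insert j C hj ih =>
    rw [disjoint_insert_left] at hCD
    have hmarg := hg.piecewise_insert_sub_le ha (subset_union_left : C ⊆ C ∪ D)
      (j := j) (by simp [hj, hCD.1])
    rw [insert_union]
    linarith [ih hCD.2]

lemma dSOS.piecewise_le_add_sdiff (hg : dSOS 1 g) (hg0 : 0 ≤ g 0) (ha : 0 ≤ a)
    {C U : Finset (Fin n)} (hCU : C ⊆ U) :
    g (U.piecewise a 0) ≤ g (C.piecewise a 0) + g ((U \ C).piecewise a 0) := by
  have := hg.piecewise_union_add_le ha (disjoint_sdiff (s := C) (t := U))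
  rw [union_sdiff_of_subset hCU] at this
  linarith

lemma dSOS.two_pow_card_mul_le_sum_powerset (hg : dSOS 1 g) (hg0 : 0 ≤ g 0) (ha : 0 ≤ a)
    (U : Finset (Fin n)) :
    2 ^ U.card * g (U.piecewise a 0) ≤ 2 * ∑ C ∈ U.powerset, g (C.piecewise a 0) :=
  calc 2 ^ U.card * g (U.piecewise a 0) = ∑ _C ∈ U.powerset, g (U.piecewise a 0) := by
        simp [card_powerset]
    _ ≤ ∑ C ∈ U.powerset, (g (C.piecewise a 0) + g ((U \ C).piecewise a 0)) :=
        sum_le_sum fun C hC => hg.piecewise_le_add_sdiff hg0 ha (mem_powerset.1 hC)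
    _ = 2 * ∑ C ∈ U.powerset, g (C.piecewise a 0) := by
        rw [sum_add_distrib, sum_powerset_sdiff U (fun C => g (C.piecewise a 0))]
        ring

lemma dSOS.two_pow_mul_add_le_sum_powerset_erase (hg : dSOS 1 g) (hg0 : 0 ≤ g 0) (ha : 0 ≤ a)
    {i : Fin n} (hgi : ∀ t c, g (Function.update t i c) = g t) {c : ℝ} (hc : 0 ≤ c) :
    2 ^ n * (g a + c) ≤ 4 * ∑ C ∈ (univ.erase i).powerset, (g (C.piecewise a 0) + c) := by
  have hcard : (2 : ℝ) ^ n = 2 * 2 ^ (univ.erase i).card := by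
    rw [card_erase_of_mem (mem_univ i), card_univ, Fintype.card_fin, ← pow_succ',
      Nat.sub_add_cancel i.pos]
  have hfull : g ((univ.erase i).piecewise a 0) = g a := by
    rw [piecewise_erase_univ, hgi]
  have hsum := hg.two_pow_card_mul_le_sum_powerset hg0 ha (univ.erase i)
  rw [hfull] at hsum
  rw [sum_add_distrib, sum_const, card_powerset, nsmul_eq_mul, hcard]
  push_cast
  nlinarith [pow_pos (two_pos (α := ℝ)) (univ.erase i).card]

end SOS

lemma le_allocSup {n m : ℕ} (f : (Fin n → Finset (Fin m)) → ℝ)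
    {T : Fin n → Finset (Fin m)} (hT : IsAlloc T) : f T ≤ allocSup f :=
  le_ciSup (f := fun T : {T // IsAlloc T} => f T.1) (Set.finite_range _).bddAbove ⟨T, hT⟩

lemma allocSup_le {n m : ℕ} {f : (Fin n → Finset (Fin m)) → ℝ} {c : ℝ}
    (h : ∀ T, IsAlloc T → f T ≤ c) : allocSup f ≤ c :=
  have : Nonempty {T : Fin n → Finset (Fin m) // IsAlloc T} :=
    ⟨⟨fun _ => ∅, fun _ _ _ => disjoint_empty_left _⟩⟩
  ciSup_le fun T => h T.1 T.2

theorem rs_vcg_welfare_general (n m : ℕ)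
    (s : Fin n → Finset (Fin m) → ℝ) (hs : ∀ i T, 0 ≤ s i T)
    (g : Fin n → Finset (Fin m) → (Fin n → ℝ) → ℝ)
    (h : Fin n → Finset (Fin m) → ℝ → ℝ)
    (hg_indep : ∀ i T (t : Fin n → ℝ) (c : ℝ),
      g i T (Function.update t i c) = g i T t)
    (hg_sos : ∀ i T, dSOS 1 (g i T))
    (hg_nonneg : ∀ i T (t : Fin n → ℝ), (∀ l, 0 ≤ t l) → 0 ≤ g i T t)
    (hh_nonneg : ∀ i T c, 0 ≤ h i T c) :
    (1 / 2 ^ n : ℝ) *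
        ∑ B ∈ (Finset.univ : Finset (Fin n)).powerset,
          allocSup (fun S => ∑ i ∈ B,
            (g i (S i) (fun l => if l = i ∨ l ∉ B then s l (S i) else 0)
              + h i (S i) (s i (S i))))
      ≥ (1 / 4) *
          allocSup (fun T => ∑ i,
            (g i (T i) (fun l => s l (T i)) + h i (T i) (s i (T i)))) := by
  set A := ∑ B ∈ (univ : Finset (Fin n)).powerset,
    allocSup (fun S => ∑ i ∈ B,
      (g i (S i) (fun l => if l = i ∨ l ∉ B then s l (S i) else 0) + h i (S i) (s i (S i))))
  suffices key : ∀ T, IsAlloc T →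
      2 ^ n * ∑ i, (g i (T i) (fun l => s l (T i)) + h i (T i) (s i (T i))) ≤ 4 * A by
    have hsup := allocSup_le (c := 4 * A / 2 ^ n) fun T hT =>
      (le_div_iff₀' (by positivity)).2 (key T hT)
    calc (1 / 4 : ℝ) * allocSup _ ≤ 1 / 4 * (4 * A / 2 ^ n) := by gcongr
      _ = 1 / 2 ^ n * A := by ring
  intro T hT
  have hproxy : ∀ i (C : Finset (Fin n)),
      g i (T i) (fun l => if l = i ∨ l ∉ Cᶜ then s l (T i) else 0) =
        g i (T i) (C.piecewise (fun l => s l (T i)) 0) := by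
    intro i C
    rw [← update_piecewise_eq_ite_compl, hg_indep]
  calc 2 ^ n * ∑ i, (g i (T i) (fun l => s l (T i)) + h i (T i) (s i (T i)))
      ≤ ∑ i, 4 * ∑ C ∈ (univ.erase i).powerset,
          (g i (T i) (C.piecewise (fun l => s l (T i)) 0) + h i (T i) (s i (T i))) := by
        rw [mul_sum]
        exact sum_le_sum fun i _ =>
          (hg_sos i (T i)).two_pow_mul_add_le_sum_powerset_erase
            (hg_nonneg i (T i) 0 fun _ => le_rfl) (fun l => hs l (T i)) (hg_indep i (T i))
            (hh_nonneg i (T i) _)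
    _ = 4 * ∑ B ∈ (univ : Finset (Fin n)).powerset, ∑ i ∈ B,
          (g i (T i) (fun l => if l = i ∨ l ∉ B then s l (T i) else 0)
            + h i (T i) (s i (T i))) := by
        rw [sum_powerset_sum_mem, mul_sum]
        simp only [hproxy]
    _ ≤ 4 * A := by
        gcongr
        exact sum_le_sum fun B _ => by apply le_allocSup _ hT

/-- Theorem 5.1 (thm:rs-vcg), welfare guarantee: combinatorial auction with
multi-dimensional signals `s i T ≥ 0` and separable-SOS valuations
`v_{iT}(t) = g_{iT}(t_{−i}) + h_{iT}(t_i)`, where each `g i T` ignores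
coordinate `i`, is SOS, nonnegative on nonnegative vectors and weakly
increasing, and each `h i T` is nonnegative and weakly increasing.
Averaging over a uniformly random potential-winner set `B`, the optimal proxy
welfare — where the proxy of `i ∈ B` for bundle `T` keeps the signals of
`Bᶜ ∪ {i}` and zeroes the rest — is at least one quarter of the optimal
welfare: the Random-Sampling VCG mechanism is a 4-approximation. -/
theorem rs_vcg_welfare (n m : ℕ)
    (s : Fin n → Finset (Fin m) → ℝ) (hs : ∀ i T, 0 ≤ s i T)
    (g : Fin n → Finset (Fin m) → (Fin n → ℝ) → ℝ)
    (h : Fin n → Finset (Fin m) → ℝ → ℝ)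
    (hg_indep : ∀ i T (t : Fin n → ℝ) (c : ℝ),
      g i T (Function.update t i c) = g i T t)
    (hg_sos : ∀ i T, dSOS 1 (g i T))
    (hg_nonneg : ∀ i T (t : Fin n → ℝ), (∀ l, 0 ≤ t l) → 0 ≤ g i T t)
    (hg_mono : ∀ i T (t t' : Fin n → ℝ), (∀ l, t l ≤ t' l) → g i T t ≤ g i T t')
    (hh_nonneg : ∀ i T c, 0 ≤ h i T c)
    (hh_mono : ∀ i T, Monotone (h i T)) :
    (1 / 2 ^ n : ℝ) *
        ∑ B ∈ (Finset.univ : Finset (Fin n)).powerset,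
          allocSup (fun S => ∑ i ∈ B,
            (g i (S i) (fun l => if l = i ∨ l ∉ B then s l (S i) else 0)
              + h i (S i) (s i (S i))))
      ≥ (1 / 4) *
          allocSup (fun T => ∑ i,
            (g i (T i) (fun l => s l (T i)) + h i (T i) (s i (T i)))) :=
  rs_vcg_welfare_general n m s hs g h hg_indep hg_sos hg_nonneg hh_nonneg
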